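/- Suppose $\alpha \ne 0$ and the real parameters $a, b, d_1, d_2$ satisfy $\Lambda_2'\,a - \Lambda_2\,b - \Lambda_4\,d_1 - \Lambda_6\,d_2 = 0$. Then $d_1 = \frac{1}{4}a - \Lambda_{24}\,b - \Lambda_{d_2}\left(d_2 - \frac{1}{3}\alpha a\right)$, where $\Lambda_{24} = \Lambda_2/\Lambda_4$ and $\Lambda_{d_2} = \Lambda_6/\Lambda_4$. -/

import Mathlib

/-!
Put `c = √(1 - β)` and `g = 1 + c cosh (2√ω z)`. Then `R₀² = 4ω / g`, so each `Λ_{2k}` is a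
multiple of `∫ g⁻ᵏ`, and `R₀` obeys the first integral
`R₀'² = ω R₀² - R₀⁴ / 2 + (1 - c²) / (16ω) R₀⁶` with `1 - c² = β = -16αω/3`. The derivative of
the integrable function `sinh (2√ω z) / g²` is a combination of `g⁻¹, g⁻², g⁻³`; integrating it
over `ℝ` gives the Pohozaev identity `8ω² Λ₂ - 6ω Λ₄ + β Λ₆ = 0`. Together these yield
`Λ₂' = Λ₄ / 4 + (α / 3) Λ₆`, and the claim is the hypothesis divided by `Λ₄ > 0`.
-/

open MeasureTheory Real

lemma one_add_sq_le_four_mul_cosh (x : ℝ) : 1 + x ^ 2 ≤ 4 * cosh x := by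
  have hquad := quadratic_le_exp_of_nonneg (abs_nonneg x)
  rw [sq_abs] at hquad
  rw [cosh_eq]
  nlinarith [exp_abs_le x, abs_nonneg x]

section CoshDenominator

variable {c t : ℝ}

lemma inv_one_add_mul_cosh_le (hc : 0 < c) (x : ℝ) :
    (1 + c * cosh x)⁻¹ ≤ 4 / c * (1 + x ^ 2)⁻¹ := by
  calc (1 + c * cosh x)⁻¹ ≤ (c * ((1 + x ^ 2) / 4))⁻¹ :=
        inv_anti₀ (by positivity) (by nlinarith [one_add_sq_le_four_mul_cosh x])
    _ = 4 / c * (1 + x ^ 2)⁻¹ := by field_simp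

lemma integrable_inv_one_add_mul_cosh_pow (hc : 0 < c) (ht : t ≠ 0) {k : ℕ} (hk : k ≠ 0) :
    Integrable fun z => (1 + c * cosh (t * z))⁻¹ ^ k := by
  have hdom : Integrable fun z => 4 / c * (1 + (t * z) ^ 2)⁻¹ :=
    (integrable_inv_one_add_sq.comp_mul_left' ht).const_mul _
  refine hdom.mono' (by fun_prop : Measurable _).aestronglyMeasurable
    (ae_of_all _ fun z => ?_)
  have hpos : 0 < 1 + c * cosh (t * z) := by positivity
  have hle_one : (1 + c * cosh (t * z))⁻¹ ≤ 1 :=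
    inv_le_one_of_one_le₀ (by nlinarith [one_le_cosh (t * z)])
  rw [norm_pow, norm_of_nonneg (inv_nonneg.2 hpos.le)]
  calc _ ≤ (1 + c * cosh (t * z))⁻¹ := pow_le_of_le_one (inv_nonneg.2 hpos.le) hle_one hk
    _ ≤ _ := inv_one_add_mul_cosh_le hc _

lemma hasDerivAt_sinh_div_one_add_mul_cosh_sq (hc : 0 < c) (z : ℝ) :
    HasDerivAt (fun z => sinh (t * z) / (1 + c * cosh (t * z)) ^ 2)
      (-(t / c) * ((1 + c * cosh (t * z))⁻¹ - 3 * (1 + c * cosh (t * z))⁻¹ ^ 2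
        + 2 * (1 - c ^ 2) * (1 + c * cosh (t * z))⁻¹ ^ 3)) z := by
  have hlin : HasDerivAt (fun z => t * z) t z := by simpa using (hasDerivAt_id z).const_mul t
  have hsinh := (hasDerivAt_sinh _).comp z hlin
  have hden := (((hasDerivAt_cosh _).comp z hlin).const_mul c).const_add 1
  have hpos : 0 < 1 + c * cosh (t * z) := by positivity
  refine (hsinh.fun_div (hden.fun_pow 2) (pow_ne_zero 2 hpos.ne')).congr_deriv ?_
  simp only [Function.comp_apply]
  field_simp
  linear_combination (-2 * t * c ^ 2 * (1 + c * cosh (t * z))) * sinh_sq (t * z)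

theorem integral_inv_one_add_mul_cosh_pow_relation (hc : 0 < c) (ht : t ≠ 0) :
    (∫ z, (1 + c * cosh (t * z))⁻¹) - 3 * (∫ z, (1 + c * cosh (t * z))⁻¹ ^ 2)
      + 2 * (1 - c ^ 2) * ∫ z, (1 + c * cosh (t * z))⁻¹ ^ 3 = 0 := by
  have h1 : Integrable fun z => (1 + c * cosh (t * z))⁻¹ := by
    simpa using integrable_inv_one_add_mul_cosh_pow hc ht one_ne_zero
  have h2 := integrable_inv_one_add_mul_cosh_pow hc ht two_ne_zero
  have h3 := integrable_inv_one_add_mul_cosh_pow hc ht three_ne_zero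
  have h12 : Integrable fun z => (1 + c * cosh (t * z))⁻¹ - 3 * (1 + c * cosh (t * z))⁻¹ ^ 2 :=
    h1.sub (h2.const_mul 3)
  have hprim : Integrable fun z => sinh (t * z) / (1 + c * cosh (t * z)) ^ 2 := by
    refine (h1.const_mul c⁻¹).mono' (by fun_prop : Measurable _).aestronglyMeasurable
      (ae_of_all _ fun z => ?_)
    have hpos : 0 < 1 + c * cosh (t * z) := by positivity
    have hsinh : |sinh (t * z)| ≤ cosh (t * z) :=
      abs_le.2 ⟨by linarith [sinh_add_cosh (t * z), exp_pos (t * z)], (sinh_lt_cosh _).le⟩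
    rw [norm_div, norm_pow, norm_of_nonneg hpos.le, Real.norm_eq_abs, div_le_iff₀ (by positivity)]
    calc |sinh (t * z)| ≤ c⁻¹ * (1 + c * cosh (t * z)) := by
          rw [mul_add, inv_mul_cancel_left₀ hc.ne']; linarith [inv_pos.2 hc]
      _ = c⁻¹ * (1 + c * cosh (t * z))⁻¹ * (1 + c * cosh (t * z)) ^ 2 := by field_simp
  have hzero := integral_eq_zero_of_hasDerivAt_of_integrable
    (hasDerivAt_sinh_div_one_add_mul_cosh_sq hc) ((h12.add (h3.const_mul _)).const_mul _) hprim
  rw [integral_const_mul, integral_add h12 (h3.const_mul _), integral_sub h1 (h2.const_mul 3),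
    integral_const_mul, integral_const_mul] at hzero
  exact (mul_eq_zero.1 hzero).resolve_left (by simp [hc.ne', ht])

end CoshDenominator

noncomputable def solitonProfile (ω c z : ℝ) : ℝ := √(4 * ω / (1 + c * cosh (2 * √ω * z)))

section SolitonProfile

variable {ω c : ℝ}

lemma solitonProfile_pos (hω : 0 < ω) (hc : 0 ≤ c) (z : ℝ) : 0 < solitonProfile ω c z :=
  sqrt_pos.2 (by positivity)

lemma solitonProfile_pow_two_mul (hω : 0 ≤ ω) (hc : 0 ≤ c) (k : ℕ) (z : ℝ) :
    solitonProfile ω c z ^ (2 * k) = (4 * ω) ^ k * (1 + c * cosh (2 * √ω * z))⁻¹ ^ k := by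
  rw [pow_mul, solitonProfile, sq_sqrt (by positivity), div_eq_mul_inv, mul_pow]

lemma deriv_solitonProfile_sq (hω : 0 < ω) (hc : 0 ≤ c) (z : ℝ) :
    deriv (solitonProfile ω c) z ^ 2 = ω * solitonProfile ω c z ^ 2
      - solitonProfile ω c z ^ 4 / 2 + (1 - c ^ 2) / (16 * ω) * solitonProfile ω c z ^ 6 := by
  have hlin : HasDerivAt (fun z => 2 * √ω * z) (2 * √ω) z := by
    simpa using (hasDerivAt_id z).const_mul (2 * √ω)
  have hden := (((hasDerivAt_cosh _).comp z hlin).const_mul c).const_add 1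
  have hpos : 0 < 1 + c * cosh (2 * √ω * z) := by positivity
  have hprof : HasDerivAt (solitonProfile ω c) _ z :=
    ((hasDerivAt_const z (4 * ω)).fun_div hden hpos.ne').sqrt (by positivity)
  rw [hprof.deriv]
  simp only [Function.comp_apply, solitonProfile]
  rw [show (4 : ℕ) = 2 * 2 from rfl, show (6 : ℕ) = 2 * 3 from rfl, pow_mul, pow_mul,
    sq_sqrt (by positivity), div_pow, mul_pow, sq_sqrt (by positivity)]
  field_simp
  linear_combination (1024 * c ^ 2 * ω ^ 2 * sinh (2 * √ω * z) ^ 2) * sq_sqrt hω.le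
    + (1024 * c ^ 2 * ω ^ 3) * sinh_sq (2 * √ω * z)

lemma integrable_solitonProfile_pow_two_mul (hω : 0 < ω) (hc : 0 < c) {k : ℕ} (hk : k ≠ 0) :
    Integrable fun z => solitonProfile ω c z ^ (2 * k) := by
  simp_rw [solitonProfile_pow_two_mul hω.le hc.le]
  exact (integrable_inv_one_add_mul_cosh_pow hc (by positivity) hk).const_mul _

lemma integral_solitonProfile_pow_two_mul (hω : 0 ≤ ω) (hc : 0 ≤ c) (k : ℕ) :
    ∫ z, solitonProfile ω c z ^ (2 * k)
      = (4 * ω) ^ k * ∫ z, (1 + c * cosh (2 * √ω * z))⁻¹ ^ k := by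
  simp_rw [solitonProfile_pow_two_mul hω hc]
  exact integral_const_mul _ _

lemma integral_solitonProfile_pow_two_mul_pos (hω : 0 < ω) (hc : 0 < c) {k : ℕ} (hk : k ≠ 0) :
    0 < ∫ z, solitonProfile ω c z ^ (2 * k) := by
  have hpos (z : ℝ) := pow_pos (solitonProfile_pos hω hc.le z) (2 * k)
  refine (integral_pos_iff_support_of_nonneg (fun z => (hpos z).le)
    (integrable_solitonProfile_pow_two_mul hω hc hk)).2 ?_
  rw [Function.support_eq_univ fun z => (hpos z).ne',
    Measure.measure_univ_pos]
  exact NeZero.ne volume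

theorem solitonProfile_pohozaev (hω : 0 < ω) (hc : 0 < c) :
    8 * ω ^ 2 * (∫ z, solitonProfile ω c z ^ 2) - 6 * ω * (∫ z, solitonProfile ω c z ^ 4)
      + (1 - c ^ 2) * ∫ z, solitonProfile ω c z ^ 6 = 0 := by
  have hrel := integral_inv_one_add_mul_cosh_pow_relation hc (t := 2 * √ω) (by positivity)
  have hpow (k : ℕ) := integral_solitonProfile_pow_two_mul hω.le hc.le k
  have h2 := hpow 1
  have h4 := hpow 2
  have h6 := hpow 3
  simp only [Nat.reduceMul, pow_one] at h2 h4 h6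
  rw [h2, h4, h6]
  linear_combination 32 * ω ^ 3 * hrel

theorem integral_deriv_solitonProfile_sq (hω : 0 < ω) (hc : 0 < c) :
    ∫ z, deriv (solitonProfile ω c) z ^ 2 = (∫ z, solitonProfile ω c z ^ 4) / 4
      - (1 - c ^ 2) / (16 * ω) * ∫ z, solitonProfile ω c z ^ 6 := by
  have hint {k : ℕ} (hk : k ≠ 0) := integrable_solitonProfile_pow_two_mul hω hc hk
  have h2 : Integrable fun z => solitonProfile ω c z ^ 2 := by simpa using hint one_ne_zero
  have h4 : Integrable fun z => solitonProfile ω c z ^ 4 := by simpa using hint two_ne_zero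
  have h6 : Integrable fun z => solitonProfile ω c z ^ 6 := by simpa using hint three_ne_zero
  have hfirst : ∫ z, deriv (solitonProfile ω c) z ^ 2 = ω * (∫ z, solitonProfile ω c z ^ 2)
      - (∫ z, solitonProfile ω c z ^ 4) / 2
      + (1 - c ^ 2) / (16 * ω) * ∫ z, solitonProfile ω c z ^ 6 := by
    simp_rw [deriv_solitonProfile_sq hω hc.le]
    have h24 : Integrable fun z => ω * solitonProfile ω c z ^ 2 - solitonProfile ω c z ^ 4 / 2 :=
      (h2.const_mul ω).sub (h4.div_const 2)
    rw [integral_add h24 (h6.const_mul _),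
      integral_sub (h2.const_mul ω) (h4.div_const 2), integral_const_mul, integral_const_mul,
      integral_div]
  rw [hfirst]
  field_simp
  linear_combination 16 * solitonProfile_pohozaev hω hc

end SolitonProfile

theorem stmt9_general (ω α β a b d1 d2 : ℝ) (hω : 0 < ω) (hβ : β = -(16 / 3) * α * ω)
    (hβ1 : β < 1)
    (R0 : ℝ → ℝ)
    (hR0 : ∀ z : ℝ, R0 z =
      Real.sqrt (4 * ω / (1 + Real.sqrt (1 - β) * Real.cosh (2 * Real.sqrt ω * z))))
    (hcond : (∫ s : ℝ, (deriv R0 s) ^ 2) * a - (∫ s : ℝ, (R0 s) ^ 2) * b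
      - (∫ s : ℝ, (R0 s) ^ 4) * d1 - (∫ s : ℝ, (R0 s) ^ 6) * d2 = 0) :
    d1 = (1 / 4) * a
      - ((∫ s : ℝ, (R0 s) ^ 2) / (∫ s : ℝ, (R0 s) ^ 4)) * b
      - ((∫ s : ℝ, (R0 s) ^ 6) / (∫ s : ℝ, (R0 s) ^ 4)) * (d2 - (1 / 3) * α * a) := by
  obtain rfl : R0 = solitonProfile ω √(1 - β) := funext hR0
  have hc : 0 < √(1 - β) := sqrt_pos.2 (by linarith)
  have hΛ4 : 0 < ∫ z, solitonProfile ω √(1 - β) z ^ 4 := by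
    simpa using integral_solitonProfile_pow_two_mul_pos hω hc two_ne_zero
  have hΛ2' : ∫ z, deriv (solitonProfile ω √(1 - β)) z ^ 2
      = (∫ z, solitonProfile ω √(1 - β) z ^ 4) / 4
        + α / 3 * ∫ z, solitonProfile ω √(1 - β) z ^ 6 := by
    rw [integral_deriv_solitonProfile_sq hω hc, sq_sqrt (by linarith), hβ]
    field_simp
    ring
  rw [hΛ2'] at hcond
  field_simp
  linear_combination -12 * hcond

/-- If `α ≠ 0` and `Λ₂' a - Λ₂ b - Λ₄ d₁ - Λ₆ d₂ = 0`, then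
`d₁ = (1/4) a - Λ₂₄ b - Λ_{d₂} (d₂ - (1/3) α a)`, where `Λ₂₄ = Λ₂/Λ₄` and
`Λ_{d₂} = Λ₆/Λ₄`. -/
theorem stmt9 (ω α β a b d1 d2 : ℝ) (hω : 0 < ω) (hβ : β = -(16 / 3) * α * ω)
    (hβ0 : 0 ≤ β) (hβ1 : β < 1) (hα : α ≠ 0)
    (R0 : ℝ → ℝ)
    (hR0 : ∀ z : ℝ, R0 z =
      Real.sqrt (4 * ω / (1 + Real.sqrt (1 - β) * Real.cosh (2 * Real.sqrt ω * z))))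
    (hcond : (∫ s : ℝ, (deriv R0 s) ^ 2) * a - (∫ s : ℝ, (R0 s) ^ 2) * b
      - (∫ s : ℝ, (R0 s) ^ 4) * d1 - (∫ s : ℝ, (R0 s) ^ 6) * d2 = 0) :
    d1 = (1 / 4) * a
      - ((∫ s : ℝ, (R0 s) ^ 2) / (∫ s : ℝ, (R0 s) ^ 4)) * b
      - ((∫ s : ℝ, (R0 s) ^ 6) / (∫ s : ℝ, (R0 s) ^ 4)) * (d2 - (1 / 3) * α * a) :=
  stmt9_general ω α β a b d1 d2 hω hβ hβ1 R0 hR0 hcond
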